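/- Give ℤ[x,y,z] the grading by ord(x^i y^l z^m) = (m,l) with lexicographic order. Then for all m, l ≥ 0 with l ≤ d-1, the highest-order monomial of f_{md+l}(x,y,z) is y^l z^m (with coefficient 1). -/
import Mathlib


/-- The polynomials f_k(x,y,z) ∈ ℤ[x,y,z] (x = X 0, y = X 1, z = X 2) of
Definition 3.19, depending on d: f_0 = 1, f_1 = y, f_d = z,
f_{md+l} = y·f_{md+l-1} - x·f_{md+l-2} for m ≥ 0 and 1 ≤ l ≤ d-1, and
f_{(m+1)d} = z·f_{md} - x·f_{(m+1)d-2} - Σ_{i=2}^{d-1} x^i·f_{md-1} - x^d·f_{(m-1)d}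
for m ≥ 1. -/
noncomputable def f3 (d : ℕ) : ℕ → MvPolynomial (Fin 3) ℤ
  | 0 => 1
  | 1 => MvPolynomial.X 1
  | k + 2 =>
    if _h : (k + 2) % d = 0 then
      if k + 2 = d then MvPolynomial.X 2
      else
        MvPolynomial.X 2 * f3 d (k + 2 - d) - MvPolynomial.X 0 * f3 d k
          - (∑ i ∈ Finset.Icc 2 (d - 1), MvPolynomial.X 0 ^ i * f3 d (k + 2 - d - 1))
          - MvPolynomial.X 0 ^ d * f3 d (k + 2 - 2 * d)
    else MvPolynomial.X 1 * f3 d (k + 1) - MvPolynomial.X 0 * f3 d k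
  termination_by k => k
  decreasing_by
    all_goals
      first
        | omega
        | (have hd : d ≠ 0 := by rintro rfl; omega
           omega)

open MvPolynomial Finset in
lemma f3_supp_X_mul {p : MvPolynomial (Fin 3) ℤ} {j : Fin 3} {i : ℕ} {s : Fin 3 →₀ ℕ}
    (hs : s ∈ (X j ^ i * p).support) : ∃ t ∈ p.support, s = Finsupp.single j i + t := by
  have h := MvPolynomial.support_mul (X j ^ i) p hs
  rw [MvPolynomial.support_X_pow] at h
  rw [Finset.mem_add] at h
  obtain ⟨a, ha, b, hb, hab⟩ := h
  simp only [Finset.mem_singleton] at ha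
  exact ⟨b, hb, by rw [← hab, ha]⟩

lemma f3_divmod {d c r : ℕ} (hr : r < d) : (c * d + r) / d = c ∧ (c * d + r) % d = r := by
  have hd : 0 < d := lt_of_le_of_lt (Nat.zero_le r) hr
  constructor
  · rw [add_comm, Nat.add_mul_div_right _ _ hd, Nat.div_eq_of_lt hr, Nat.zero_add]
  · rw [add_comm, Nat.add_mul_mod_self_right, Nat.mod_eq_of_lt hr]

open MvPolynomial Finset in
lemma f3_aux (d : ℕ) (hd : 2 ≤ d) (k : ℕ) :
    MvPolynomial.coeff (Finsupp.single 1 (k % d) + Finsupp.single 2 (k / d)) (f3 d k) = 1 ∧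
    ∀ s ∈ (f3 d k).support, s 2 < k / d ∨ (s 2 = k / d ∧ s 1 ≤ k % d) := by
  induction k using Nat.strong_induction_on with
  | _ k ih =>
  rcases k with _ | _ | n
  · rw [show f3 d 0 = 1 by rw [f3]]
    constructor
    · simp
    · intro s hs
      rw [MvPolynomial.mem_support_iff, MvPolynomial.coeff_one] at hs
      have hs0 : s = 0 := by by_contra h; simp [h, eq_comm] at hs
      subst hs0; simp
  · rw [show f3 d 1 = X 1 by rw [f3]]
    have h1 : 1 % d = 1 := Nat.mod_eq_of_lt (by omega)
    have h2 : 1 / d = 0 := Nat.div_eq_of_lt (by omega)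
    rw [h1, h2]
    constructor
    · rw [show (Finsupp.single (1 : Fin 3) 1 + Finsupp.single 2 0) = Finsupp.single 1 1 by simp]
      simp [MvPolynomial.coeff_X]
    · intro s hs
      rw [MvPolynomial.support_X, Finset.mem_singleton] at hs
      subst hs; right; simp
  · rw [f3]
    by_cases h1 : (n + 2) % d = 0
    · rw [dif_pos h1]
      by_cases h2 : n + 2 = d
      · rw [if_pos h2]
        have hqq : (n + 2) / d = 1 := by rw [h2, Nat.div_self (by omega)]
        rw [h1, hqq]
        constructor
        · rw [show (Finsupp.single (1 : Fin 3) 0 + Finsupp.single 2 1) = Finsupp.single 2 1 by simp]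
          simp [MvPolynomial.coeff_X]
        · intro s hs
          rw [MvPolynomial.support_X, Finset.mem_singleton] at hs
          subst hs; right; simp
      · rw [if_neg h2]
        obtain ⟨q, hq⟩ : ∃ q, n + 2 = q * d :=
          ⟨(n + 2) / d, (Nat.div_mul_cancel (Nat.dvd_of_mod_eq_zero h1)).symm⟩
        have hq2 : 2 ≤ q := by
          rcases Nat.lt_or_ge q 2 with h | h
          · interval_cases q <;> omega
          · exact h
        have e1 : (q - 1) * d = q * d - d := by rw [Nat.sub_mul, one_mul]
        have e2 : (q - 2) * d = q * d - 2 * d := by rw [Nat.sub_mul]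
        have e3 : 2 * d ≤ q * d := Nat.mul_le_mul_right d hq2
        have hdq : (n + 2) / d = q := by rw [hq, Nat.mul_div_cancel _ (by omega)]
        rw [h1, hdq]
        -- indices
        have i1 : n + 2 - d = (q - 1) * d + 0 := by omega
        have i2 : n = (q - 1) * d + (d - 2) := by omega
        have i3 : n + 2 - d - 1 = (q - 2) * d + (d - 1) := by omega
        have i4 : n + 2 - 2 * d = (q - 2) * d + 0 := by omega
        have dm1 := f3_divmod (d := d) (c := q - 1) (r := 0) (by omega)
        have dm2 := f3_divmod (d := d) (c := q - 1) (r := d - 2) (by omega)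
        have dm3 := f3_divmod (d := d) (c := q - 2) (r := d - 1) (by omega)
        have dm4 := f3_divmod (d := d) (c := q - 2) (r := 0) (by omega)
        obtain ⟨IH1c, IH1s⟩ := ih (n + 2 - d) (by omega)
        obtain ⟨IH2c, IH2s⟩ := ih n (by omega)
        obtain ⟨IH3c, IH3s⟩ := ih (n + 2 - d - 1) (by omega)
        obtain ⟨IH4c, IH4s⟩ := ih (n + 2 - 2 * d) (by omega)
        rw [i1, dm1.1, dm1.2] at IH1c IH1s
        rw [i2, dm2.1, dm2.2] at IH2c IH2s
        rw [i3, dm3.1, dm3.2] at IH3c IH3s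
        rw [i4, dm4.1, dm4.2] at IH4c IH4s
        rw [← i1] at IH1c IH1s
        rw [← i2] at IH2c IH2s
        rw [← i3] at IH3c IH3s
        rw [← i4] at IH4c IH4s
        set T : Fin 3 →₀ ℕ := Finsupp.single 1 0 + Finsupp.single 2 q with hT
        have hT1 : T 1 = 0 := by rw [hT]; simp
        have hT2 : T 2 = q := by rw [hT]; simp
        have hB : MvPolynomial.coeff T (X 0 * f3 d n) = 0 := by
          by_contra hB0
          obtain ⟨t, ht, hst⟩ := f3_supp_X_mul (i := 1)
            (by rw [pow_one]; exact MvPolynomial.mem_support_iff.2 hB0)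
          have h2t : t 2 = q := by
            have := congrArg (fun f => f 2) hst
            simp only [Finsupp.add_apply] at this
            simp only [Finsupp.single_apply] at this
            simpa [hT2] using this.symm
          rcases IH2s t ht with h | h <;> omega
        have hC : MvPolynomial.coeff T
            (∑ i ∈ Finset.Icc 2 (d - 1), X 0 ^ i * f3 d (n + 2 - d - 1)) = 0 := by
          rw [MvPolynomial.coeff_sum]
          apply Finset.sum_eq_zero
          intro i _
          by_contra hC0
          obtain ⟨t, ht, hst⟩ := f3_supp_X_mul (MvPolynomial.mem_support_iff.2 hC0)
          have h2t : t 2 = q := by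
            have := congrArg (fun f => f 2) hst
            simp only [Finsupp.add_apply] at this
            simp only [Finsupp.single_apply] at this
            simpa [hT2] using this.symm
          rcases IH3s t ht with h | h <;> omega
        have hD : MvPolynomial.coeff T (X 0 ^ d * f3 d (n + 2 - 2 * d)) = 0 := by
          by_contra hD0
          obtain ⟨t, ht, hst⟩ := f3_supp_X_mul (MvPolynomial.mem_support_iff.2 hD0)
          have h2t : t 2 = q := by
            have := congrArg (fun f => f 2) hst
            simp only [Finsupp.add_apply] at this
            simp only [Finsupp.single_apply] at this
            simpa [hT2] using this.symm
          rcases IH4s t ht with h | h <;> omega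
        constructor
        · rw [MvPolynomial.coeff_sub, MvPolynomial.coeff_sub, MvPolynomial.coeff_sub,
            hB, hC, hD, sub_zero, sub_zero, sub_zero]
          have hTs : T = Finsupp.single 2 1 + (Finsupp.single 1 0 + Finsupp.single 2 (q - 1)) := by
            rw [hT]; ext a; fin_cases a <;> simp [Finsupp.single_apply] <;> omega
          rw [hTs, MvPolynomial.coeff_X_mul, IH1c]
        · intro s hs
          rcases Finset.mem_union.1 (MvPolynomial.support_sub _ _ _ hs) with hs | hs
          rotate_left
          · -- D branch
            obtain ⟨t, ht, hst⟩ := f3_supp_X_mul hs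
            have h2t : s 2 = t 2 := by rw [hst]; simp
            rcases IH4s t ht with h | h <;> (left; omega)
          rcases Finset.mem_union.1 (MvPolynomial.support_sub _ _ _ hs) with hs | hs
          rotate_left
          · -- C branch
            have hs' := MvPolynomial.support_sum hs
            obtain ⟨i, _, hsi⟩ := Finset.mem_biUnion.1 hs'
            obtain ⟨t, ht, hst⟩ := f3_supp_X_mul hsi
            have h2t : s 2 = t 2 := by rw [hst]; simp
            rcases IH3s t ht with h | h <;> (left; omega)
          rcases Finset.mem_union.1 (MvPolynomial.support_sub _ _ _ hs) with hs | hs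
          · -- A branch
            obtain ⟨t, ht, hst⟩ := f3_supp_X_mul (i := 1)
              (by rw [pow_one]; exact hs)
            have h2t : s 2 = 1 + t 2 := by rw [hst]; simp
            have h1t : s 1 = t 1 := by rw [hst]; simp
            rcases IH1s t ht with h | h
            · left; omega
            · right; omega
          · -- B branch
            obtain ⟨t, ht, hst⟩ := f3_supp_X_mul (i := 1)
              (by rw [pow_one]; exact hs)
            have h2t : s 2 = t 2 := by rw [hst]; simp
            rcases IH2s t ht with h | h <;> (left; omega)
    · rw [dif_neg h1]
      set l := (n + 2) % d with hli
      set q := (n + 2) / d with hqi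
      have hld : l < d := Nat.mod_lt _ (by omega)
      have hl1 : 1 ≤ l := by omega
      have hcomm : q * d = d * q := Nat.mul_comm _ _
      have hq : n + 2 = q * d + l := by
        rw [hcomm]; exact (Nat.div_add_mod (n + 2) d).symm
      -- index n+1
      have i1 : n + 1 = q * d + (l - 1) := by omega
      have dm1 := f3_divmod (d := d) (c := q) (r := l - 1) (by omega)
      obtain ⟨IH1c, IH1s⟩ := ih (n + 1) (by omega)
      rw [i1, dm1.1, dm1.2] at IH1c IH1s
      rw [← i1] at IH1c IH1s
      -- index n : unified bound
      have hbn : ∀ t ∈ (f3 d n).support, t 2 < q ∨ (t 2 = q ∧ t 1 + 2 ≤ l) := by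
        obtain ⟨_, IH2s⟩ := ih n (by omega)
        by_cases hl2 : l = 1
        · have hq1 : 1 ≤ q := by
            rcases Nat.eq_zero_or_pos q with h | h
            · rw [h, zero_mul] at hq; omega
            · exact h
          have e1 : (q - 1) * d = q * d - d := by rw [Nat.sub_mul, one_mul]
          have e3 : d ≤ q * d := by
            calc d = 1 * d := (one_mul d).symm
            _ ≤ q * d := Nat.mul_le_mul_right d hq1
          have i2 : n = (q - 1) * d + (d - 1) := by omega
          have dm2 := f3_divmod (d := d) (c := q - 1) (r := d - 1) (by omega)
          rw [i2, dm2.1, dm2.2] at IH2s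
          rw [← i2] at IH2s
          intro t ht
          rcases IH2s t ht with h | h <;> (left; omega)
        · have i2 : n = q * d + (l - 2) := by omega
          have dm2 := f3_divmod (d := d) (c := q) (r := l - 2) (by omega)
          rw [i2, dm2.1, dm2.2] at IH2s
          rw [← i2] at IH2s
          intro t ht
          rcases IH2s t ht with h | h
          · left; exact h
          · right; omega
      constructor
      · have hB : MvPolynomial.coeff (Finsupp.single 1 l + Finsupp.single 2 q)
            (X 0 * f3 d n) = 0 := by
          by_contra hB0
          obtain ⟨t, ht, hst⟩ := f3_supp_X_mul (i := 1)
            (by rw [pow_one]; exact MvPolynomial.mem_support_iff.2 hB0)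
          have h2t : t 2 = q := by
            have := congrArg (fun f => f 2) hst
            simpa using this.symm
          have h1t : t 1 = l := by
            have := congrArg (fun f => f 1) hst
            simpa using this.symm
          rcases hbn t ht with h | h <;> omega
        rw [MvPolynomial.coeff_sub, hB, sub_zero]
        have hTs : (Finsupp.single (1 : Fin 3) l + Finsupp.single 2 q) =
            Finsupp.single 1 1 + (Finsupp.single 1 (l - 1) + Finsupp.single 2 q) := by
          ext a; fin_cases a <;> simp [Finsupp.single_apply] <;> omega
        rw [hTs, MvPolynomial.coeff_X_mul, IH1c]
      · intro s hs
        rcases Finset.mem_union.1 (MvPolynomial.support_sub _ _ _ hs) with hs | hs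
        · obtain ⟨t, ht, hst⟩ := f3_supp_X_mul (i := 1)
            (by rw [pow_one]; exact hs)
          have h2t : s 2 = t 2 := by rw [hst]; simp
          have h1t : s 1 = 1 + t 1 := by rw [hst]; simp
          rcases IH1s t ht with h | h
          · left; omega
          · right; omega
        · obtain ⟨t, ht, hst⟩ := f3_supp_X_mul (i := 1)
            (by rw [pow_one]; exact hs)
          have h2t : s 2 = t 2 := by rw [hst]; simp
          have h1t : s 1 = t 1 := by rw [hst]; simp
          rcases hbn t ht with h | h
          · left; omega
          · right; omega


open MvPolynomial Finset in
/-- the highest-order monomial of f_{md+l}(x,y,z) (ordering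
monomials x^i y^a z^b by (b,a) lexicographically) is y^l z^m with coefficient 1:
every monomial x^i y^a z^b occurring in f_{md+l} satisfies (b,a) ≤ (m,l)
lexicographically, and the coefficient of the monomial y^l z^m is 1. -/
theorem f3_highest_order_term (d : ℕ) (hd : 2 ≤ d) (m l : ℕ) (hl : l ≤ d - 1) :
    MvPolynomial.coeff (Finsupp.single 1 l + Finsupp.single 2 m) (f3 d (m * d + l)) = 1 ∧
    ∀ s ∈ (f3 d (m * d + l)).support, s 2 < m ∨ (s 2 = m ∧ s 1 ≤ l) := by
  have dm := f3_divmod (d := d) (c := m) (r := l) (by omega)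
  have h := f3_aux d hd (m * d + l)
  rw [dm.1, dm.2] at h
  exact h
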